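/- arXiv:2512.09788 — 3 statements merged into one kernel-verified Lean document; each statement's English description precedes it below -/
import Mathlib

section
/- Consider the Bellman value function φ defined by backward induction: φ(R̄, p, k, δ) = 0; for t < R̄, φ(t, p_t, k, δ) = v(k) − k·p_{t−1} if k + δ ≤ m, and φ(t, p_t, k, δ) = max_{u ≤ k} Σ_{δ'} P^t(δ'|δ)·φ(t+1, p_{t+1}, u, δ') otherwise, where P^t is the opponent's Markov transition kernel. Let σ^v(t) denote the SB demand of valuation v at price p_t. Then for all t ∈ {1,...,R̄}, k ∈ {0,...,m}, δ: φ(t, p_t, k, δ) ≤ v(σ^v(t−1) ∧ k) − (σ^v(t−1) ∧ k)·p_{t−1}. -/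
/-- Upper bound on the Bellman value function: for all `1 ≤ t ≤ R`, `k ≤ m`,
`δ ≤ D`, `φ t k δ ≤ v (σ(t-1) ⊓ k) - (σ(t-1) ⊓ k) * p (t-1)`, where `σ` is the
straightforward-bidding demand of the valuation `v`. -/
theorem stmt14 (m D R : ℕ) (pinit ΔP : ℝ) (hpinit : 0 ≤ pinit) (hΔP : 0 < ΔP)
    (p : ℕ → ℝ) (hp : ∀ t, p t = pinit + t * ΔP)
    (z : ℕ → ℝ) (hz : ∀ j, 1 ≤ j → j < m → z (j + 1) ≤ z j)
    (hz0 : ∀ j, 1 ≤ j → j ≤ m → 0 ≤ z j)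
    (v : ℕ → ℝ) (hv : ∀ k, v k = ∑ j ∈ Finset.Icc 1 k, z j)
    (σ : ℕ → ℕ) (hσ : ∀ t, σ t = ((Finset.Icc 1 m).filter fun j => p t < z j).card)
    (P : ℕ → ℕ → ℕ → ℝ)
    (hPnn : ∀ t δ δ', 0 ≤ P t δ δ')
    (hPsum : ∀ t δ, δ ≤ D → ∑ δ' ∈ Finset.range (D + 1), P t δ δ' = 1)
    (hPsupp : ∀ t δ δ', δ < δ' → P t δ δ' = 0)
    (φ : ℕ → ℕ → ℕ → ℝ)
    (hφR : ∀ k δ, φ R k δ = 0)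
    (hφ1 : ∀ t, t < R → ∀ k δ, k + δ ≤ m → φ t k δ = v k - k * p (t - 1))
    (hφ2 : ∀ t, t < R → ∀ k δ, m < k + δ →
      φ t k δ = (Finset.range (k + 1)).sup' ⟨0, Finset.mem_range.mpr (Nat.succ_pos k)⟩
        (fun u => ∑ δ' ∈ Finset.range (D + 1), P t δ δ' * φ (t + 1) u δ')) :
    ∀ t, 1 ≤ t → t ≤ R → ∀ k, k ≤ m → ∀ δ, δ ≤ D →
      φ t k δ ≤ v (min (σ (t - 1)) k) - (min (σ (t - 1)) k : ℝ) * p (t - 1) := by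
  -- price monotonicity
  have pmono : ∀ s t : ℕ, s ≤ t → p s ≤ p t := by
    intro s t hst
    rw [hp s, hp t]
    have : (s : ℝ) ≤ t := by exact_mod_cast hst
    nlinarith
  -- z monotone (nonincreasing)
  have zmono : ∀ i j : ℕ, 1 ≤ i → i ≤ j → j ≤ m → z j ≤ z i := by
    intro i j hi hij hjm
    induction j with
    | zero => omega
    | succ n ih =>
      rcases Nat.lt_or_ge i (n + 1) with h | h
      · have hn : i ≤ n := by omega
        have h1 : z (n + 1) ≤ z n := hz n (by omega) (by omega)
        exact le_trans h1 (ih hn (by omega))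
      · have : i = n + 1 := by omega
        subst this; exact le_refl _
  -- characterization of σ
  have hσle : ∀ t, σ t ≤ m := by
    intro t
    rw [hσ t]
    calc ((Finset.Icc 1 m).filter fun j => p t < z j).card
        ≤ (Finset.Icc 1 m).card := Finset.card_filter_le _ _
      _ = m := by rw [Nat.card_Icc]; omega
  have hmem : ∀ t j, 1 ≤ j → j ≤ m → (p t < z j ↔ j ≤ σ t) := by
    intro t j hj1 hjm
    constructor
    · intro hlt
      have hsub : Finset.Icc 1 j ⊆ (Finset.Icc 1 m).filter fun i => p t < z i := by
        intro i hi
        simp only [Finset.mem_Icc] at hi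
        simp only [Finset.mem_filter, Finset.mem_Icc]
        refine ⟨⟨hi.1, by omega⟩, lt_of_lt_of_le hlt (zmono i j hi.1 hi.2 hjm)⟩
      have := Finset.card_le_card hsub
      rw [Nat.card_Icc] at this
      rw [hσ t]; omega
    · intro hle
      by_contra hnot
      push_neg at hnot
      have hsub : ((Finset.Icc 1 m).filter fun i => p t < z i) ⊆ Finset.Icc 1 (j - 1) := by
        intro i hi
        simp only [Finset.mem_filter, Finset.mem_Icc] at hi
        simp only [Finset.mem_Icc]
        refine ⟨hi.1.1, ?_⟩
        by_contra hcon
        push_neg at hcon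
        have hij : j ≤ i := by omega
        have := zmono j i hj1 hij hi.1.2
        linarith [hi.2]
      have := Finset.card_le_card hsub
      rw [Nat.card_Icc] at this
      rw [hσ t] at hle
      omega
  have σmono : ∀ s t : ℕ, s ≤ t → σ t ≤ σ s := by
    intro s t hst
    rw [hσ s, hσ t]
    apply Finset.card_le_card
    intro i hi
    simp only [Finset.mem_filter, Finset.mem_Icc] at hi ⊢
    exact ⟨hi.1, lt_of_le_of_lt (pmono s t hst) hi.2⟩
  -- difference of v as a sum over Ioc
  have hvIoc : ∀ k, v k = ∑ j ∈ Finset.Ioc 0 k, z j := by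
    intro k
    rw [hv k]
    congr 1
  have vdiff : ∀ a b : ℕ, a ≤ b → v b - v a = ∑ j ∈ Finset.Ioc a b, z j := by
    intro a b hab
    rw [hvIoc a, hvIoc b]
    have := Finset.sum_Ioc_consecutive z (Nat.zero_le a) hab
    linarith
  -- monotone increasing below σ
  have lemB : ∀ s a b : ℕ, a ≤ b → b ≤ σ s → b ≤ m →
      v a - a * p s ≤ v b - b * p s := by
    intro s a b hab hbσ hbm
    have hsum : ∑ j ∈ Finset.Ioc a b, p s ≤ ∑ j ∈ Finset.Ioc a b, z j := by
      apply Finset.sum_le_sum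
      intro i hi
      simp only [Finset.mem_Ioc] at hi
      exact le_of_lt ((hmem s i (by omega) (by omega)).2 (by omega))
    rw [Finset.sum_const, Nat.card_Ioc, nsmul_eq_mul] at hsum
    rw [← vdiff a b hab] at hsum
    have hcast : ((b - a : ℕ) : ℝ) = (b : ℝ) - a := by
      rw [Nat.cast_sub hab]
    rw [hcast] at hsum
    nlinarith
  -- monotone decreasing above σ
  have lemC : ∀ s a b : ℕ, σ s ≤ a → a ≤ b → b ≤ m →
      v b - b * p s ≤ v a - a * p s := by
    intro s a b hσa hab hbm
    have hsum : ∑ j ∈ Finset.Ioc a b, z j ≤ ∑ j ∈ Finset.Ioc a b, p s := by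
      apply Finset.sum_le_sum
      intro i hi
      simp only [Finset.mem_Ioc] at hi
      by_contra hcon
      push_neg at hcon
      have := (hmem s i (by omega) (by omega)).1 hcon
      omega
    rw [Finset.sum_const, Nat.card_Ioc, nsmul_eq_mul] at hsum
    rw [← vdiff a b hab] at hsum
    have hcast : ((b - a : ℕ) : ℝ) = (b : ℝ) - a := by
      rw [Nat.cast_sub hab]
    rw [hcast] at hsum
    nlinarith
  -- main induction on d = R - t
  have main : ∀ d t : ℕ, 1 ≤ t → t + d = R → ∀ k, k ≤ m → ∀ δ, δ ≤ D →
      φ t k δ ≤ v (min (σ (t - 1)) k) - ((min (σ (t - 1)) k : ℕ) : ℝ) * p (t - 1) := by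
    intro d
    induction d with
    | zero =>
      intro t ht1 htR k hk δ hδ
      have ht : t = R := by omega
      subst ht
      rw [hφR k δ]
      have h0 : v 0 = 0 := by rw [hv]; simp
      have := lemB (t - 1) 0 (min (σ (t - 1)) k) (Nat.zero_le _)
        (min_le_left _ _) (le_trans (min_le_right _ _) hk)
      rw [h0] at this
      simpa using this
    | succ d ih =>
      intro t ht1 htR k hk δ hδ
      have htR' : t < R := by omega
      rcases le_or_gt (k + δ) m with hkd | hkd
      · rw [hφ1 t htR' k δ hkd]
        rcases le_or_gt k (σ (t - 1)) with h | h
        · rw [min_eq_right h]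
        · rw [min_eq_left (le_of_lt h)]
          exact lemC (t - 1) (σ (t - 1)) k (le_refl _) (le_of_lt h) hk
      · rw [hφ2 t htR' k δ hkd]
        apply Finset.sup'_le
        intro u hu
        simp only [Finset.mem_range] at hu
        have huk : u ≤ k := by omega
        set B : ℝ := v (min (σ t) k) - ((min (σ t) k : ℕ) : ℝ) * p t with hB
        have hstep : ∑ δ' ∈ Finset.range (D + 1), P t δ δ' * φ (t + 1) u δ' ≤ B := by
          have hbound : ∀ δ' ∈ Finset.range (D + 1),
              P t δ δ' * φ (t + 1) u δ' ≤ P t δ δ' * B := by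
            intro δ' hδ'
            simp only [Finset.mem_range] at hδ'
            apply mul_le_mul_of_nonneg_left _ (hPnn t δ δ')
            have hIH := ih (t + 1) (by omega) (by omega) u (le_trans huk hk) δ' (by omega)
            simp only [Nat.add_sub_cancel] at hIH
            refine le_trans hIH ?_
            -- v (min (σ t) u) - ... ≤ B
            exact lemB t (min (σ t) u) (min (σ t) k)
              (min_le_min (le_refl _) huk) (min_le_left _ _)
              (le_trans (min_le_right _ _) hk)
          calc ∑ δ' ∈ Finset.range (D + 1), P t δ δ' * φ (t + 1) u δ'
              ≤ ∑ δ' ∈ Finset.range (D + 1), P t δ δ' * B := Finset.sum_le_sum hbound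
            _ = (∑ δ' ∈ Finset.range (D + 1), P t δ δ') * B := by
                rw [Finset.sum_mul]
            _ = B := by rw [hPsum t δ hδ, one_mul]
        refine le_trans hstep ?_
        -- B ≤ target
        have hσt : σ t ≤ σ (t - 1) := σmono (t - 1) t (by omega)
        have hamin : min (σ t) k ≤ min (σ (t - 1)) k := min_le_min hσt (le_refl _)
        have h1 : B ≤ v (min (σ t) k) - ((min (σ t) k : ℕ) : ℝ) * p (t - 1) := by
          rw [hB]
          have hpm : p (t - 1) ≤ p t := pmono (t - 1) t (by omega)
          have : ((min (σ t) k : ℕ) : ℝ) ≥ 0 := Nat.cast_nonneg _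
          nlinarith
        refine le_trans h1 ?_
        exact lemB (t - 1) (min (σ t) k) (min (σ (t - 1)) k) hamin
          (min_le_left _ _) (le_trans (min_le_right _ _) hk)
  intro t ht1 htR k hk δ hδ
  have := main (R - t) t ht1 (by omega) k hk δ hδ
  simpa [Nat.cast_min] using this
end

section
/- With the Bellman value function φ as above and kernels P^t supported on {δ' : δ' ≤ δ}, if each P^t is stochastically monotone (Σ_{δ'≥s} P^t(δ'|δ) ≤ Σ_{δ'≥s} P^t(δ'|δ+1) for all s, δ), then for each t ∈ {1,...,R̄} and each k ≤ σ^v(t−1), the map δ ↦ φ(t, p_t, k, δ) is nonincreasing: φ(t, p_t, k, δ+1) ≤ φ(t, p_t, k, δ). -/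
private lemma telesc (f : ℕ → ℝ) (n : ℕ) :
    ∑ s ∈ Finset.Icc 1 n, (f s - f (s - 1)) = f n - f 0 := by
  induction n with
  | zero => simp
  | succ n ih =>
    rw [Finset.sum_Icc_succ_top (by omega), ih, Nat.add_sub_cancel]
    ring

private lemma abel_sum (D : ℕ) (μ f : ℕ → ℝ)
    (hμ : ∑ δ' ∈ Finset.range (D + 1), μ δ' = 1) :
    ∑ δ' ∈ Finset.range (D + 1), μ δ' * f δ' =
      f 0 + ∑ s ∈ Finset.Icc 1 D, (f s - f (s - 1)) * ∑ δ' ∈ Finset.Icc s D, μ δ' := by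
  have hins : Finset.range (D + 1) = insert 0 (Finset.Icc 1 D) := by
    ext j; simp [Finset.mem_range, Finset.mem_Icc]; omega
  have h1 : ∑ s ∈ Finset.Icc 1 D, (f s - f (s - 1)) * ∑ δ' ∈ Finset.Icc s D, μ δ'
      = ∑ s ∈ Finset.Icc 1 D, ∑ δ' ∈ Finset.Icc s D, (f s - f (s - 1)) * μ δ' := by
    simp [Finset.mul_sum]
  have h2 : ∑ s ∈ Finset.Icc 1 D, ∑ δ' ∈ Finset.Icc s D, (f s - f (s - 1)) * μ δ'
      = ∑ δ' ∈ Finset.Icc 1 D, ∑ s ∈ Finset.Icc 1 δ', (f s - f (s - 1)) * μ δ' := by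
    apply Finset.sum_comm'
    intro s δ'
    simp only [Finset.mem_Icc]
    omega
  have h3 : ∑ δ' ∈ Finset.Icc 1 D, ∑ s ∈ Finset.Icc 1 δ', (f s - f (s - 1)) * μ δ'
      = ∑ δ' ∈ Finset.Icc 1 D, (f δ' - f 0) * μ δ' := by
    apply Finset.sum_congr rfl
    intro δ' _
    rw [← Finset.sum_mul, telesc]
  rw [h1, h2, h3]
  have hsum : μ 0 + ∑ δ' ∈ Finset.Icc 1 D, μ δ' = 1 := by
    rw [← hμ, hins, Finset.sum_insert (by simp)]
  have hLHS : ∑ δ' ∈ Finset.range (D + 1), μ δ' * f δ'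
      = μ 0 * f 0 + ∑ δ' ∈ Finset.Icc 1 D, μ δ' * f δ' := by
    rw [hins, Finset.sum_insert (by simp)]
  rw [hLHS]
  have hexp : ∑ δ' ∈ Finset.Icc 1 D, (f δ' - f 0) * μ δ'
      = (∑ δ' ∈ Finset.Icc 1 D, μ δ' * f δ') - f 0 * ∑ δ' ∈ Finset.Icc 1 D, μ δ' := by
    rw [Finset.mul_sum, ← Finset.sum_sub_distrib]
    apply Finset.sum_congr rfl
    intro δ' _
    ring
  rw [hexp]
  linear_combination f 0 * hsum

private lemma mono_exp (D : ℕ) (μ ν f : ℕ → ℝ)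
    (hμ : ∑ δ' ∈ Finset.range (D + 1), μ δ' = 1)
    (hν : ∑ δ' ∈ Finset.range (D + 1), ν δ' = 1)
    (hdom : ∀ s, 1 ≤ s → s ≤ D → ∑ δ' ∈ Finset.Icc s D, μ δ' ≤ ∑ δ' ∈ Finset.Icc s D, ν δ')
    (hf : ∀ s, s < D → f (s + 1) ≤ f s) :
    ∑ δ' ∈ Finset.range (D + 1), ν δ' * f δ' ≤ ∑ δ' ∈ Finset.range (D + 1), μ δ' * f δ' := by
  rw [abel_sum D μ f hμ, abel_sum D ν f hν]
  apply add_le_add le_rfl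
  apply Finset.sum_le_sum
  intro s hs
  simp only [Finset.mem_Icc] at hs
  have hfs : f s - f (s - 1) ≤ 0 := by
    have h' := hf (s - 1) (by omega)
    rw [Nat.sub_add_cancel hs.1] at h'
    linarith
  exact mul_le_mul_of_nonpos_left (hdom s hs.1 hs.2) hfs

/-- If the opponent's transition kernels are stochastically monotone, then the
Bellman value function `φ` (with bids restricted to `u ≤ k ⊓ σ(t)`) is
nonincreasing in the opponent's last demand `δ`. -/
theorem stmt15 (m D R : ℕ) (pinit ΔP : ℝ) (hpinit : 0 ≤ pinit) (hΔP : 0 < ΔP)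
    (p : ℕ → ℝ) (hp : ∀ t, p t = pinit + t * ΔP)
    (z : ℕ → ℝ) (hz : ∀ j, 1 ≤ j → j < m → z (j + 1) ≤ z j)
    (hz0 : ∀ j, 1 ≤ j → j ≤ m → 0 ≤ z j)
    (v : ℕ → ℝ) (hv : ∀ k, v k = ∑ j ∈ Finset.Icc 1 k, z j)
    (σ : ℕ → ℕ) (hσ : ∀ t, σ t = ((Finset.Icc 1 m).filter fun j => p t < z j).card)
    (P : ℕ → ℕ → ℕ → ℝ)
    (hPnn : ∀ t δ δ', 0 ≤ P t δ δ')
    (hPsum : ∀ t δ, δ ≤ D → ∑ δ' ∈ Finset.range (D + 1), P t δ δ' = 1)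
    (hPsupp : ∀ t δ δ', δ < δ' → P t δ δ' = 0)
    (hSM : ∀ t s δ, δ < D →
      ∑ δ' ∈ Finset.Icc s D, P t δ δ' ≤ ∑ δ' ∈ Finset.Icc s D, P t (δ + 1) δ')
    (φ : ℕ → ℕ → ℕ → ℝ)
    (hφR : ∀ k δ, φ R k δ = 0)
    (hφ1 : ∀ t, t < R → ∀ k δ, k + δ ≤ m → φ t k δ = v k - k * p (t - 1))
    (hφ2 : ∀ t, t < R → ∀ k δ, m < k + δ →
      φ t k δ = (Finset.range (min k (σ t) + 1)).sup' Finset.nonempty_range_add_one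
        (fun u => ∑ δ' ∈ Finset.range (D + 1), P t δ δ' * φ (t + 1) u δ')) :
    ∀ t, 1 ≤ t → t ≤ R → ∀ k, k ≤ σ (t - 1) → ∀ δ, δ < D →
      φ t k (δ + 1) ≤ φ t k δ := by
  -- prices are monotone
  have hpmono : ∀ a b : ℕ, a ≤ b → p a ≤ p b := by
    intro a b hab
    rw [hp, hp]
    have h1 : (a : ℝ) ≤ b := Nat.cast_le.mpr hab
    nlinarith
  -- z is nonincreasing on [1, m]
  have zmono : ∀ i j : ℕ, 1 ≤ j → j ≤ i → i ≤ m → z i ≤ z j := by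
    intro i
    induction i with
    | zero => intro j hj1 hji _; omega
    | succ i ih =>
      intro j hj1 hji him
      rcases Nat.lt_or_ge j (i + 1) with h | h
      · have hji' : j ≤ i := by omega
        have h1 : z (i + 1) ≤ z i := hz i (by omega) (by omega)
        exact le_trans h1 (ih j hj1 hji' (by omega))
      · have : j = i + 1 := by omega
        subst this; exact le_refl _
  -- σ is bounded by m
  have hσm : ∀ s, σ s ≤ m := by
    intro s
    rw [hσ]
    calc ((Finset.Icc 1 m).filter fun j => p s < z j).card
        ≤ (Finset.Icc 1 m).card := Finset.card_filter_le _ _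
      _ = m := by rw [Nat.card_Icc]; omega
  -- marginal values exceed the price up to the SB demand
  have hzσ : ∀ s j, 1 ≤ j → j ≤ σ s → p s < z j := by
    intro s j hj1 hjσ
    by_contra hcon
    push_neg at hcon
    have hjm : j ≤ m := le_trans hjσ (hσm s)
    have hsub : ((Finset.Icc 1 m).filter fun i => p s < z i) ⊆ Finset.Icc 1 (j - 1) := by
      intro i hi
      simp only [Finset.mem_filter, Finset.mem_Icc] at hi ⊢
      refine ⟨hi.1.1, ?_⟩
      by_contra hij
      push_neg at hij
      have hzi : z i ≤ z j := zmono i j hj1 (by omega) hi.1.2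
      linarith [hi.2]
    have hcard := Finset.card_le_card hsub
    rw [Nat.card_Icc] at hcard
    rw [hσ] at hjσ
    omega
  -- v 0 = 0
  have hv0 : v 0 = 0 := by rw [hv]; simp
  -- reward comparison
  have hvdiff : ∀ s k u : ℕ, k ≤ σ s → u ≤ k → v u - u * p s ≤ v k - k * p s := by
    intro s k u hk hu
    have hioc : ∀ n : ℕ, Finset.Icc 1 n = Finset.Ioc 0 n := by
      intro n; ext j; simp [Finset.mem_Icc, Finset.mem_Ioc]; omega
    have hsplit : v u + ∑ j ∈ Finset.Ioc u k, z j = v k := by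
      rw [hv, hv, hioc, hioc]
      exact Finset.sum_Ioc_consecutive z (Nat.zero_le u) hu
    have hge : ((k - u : ℕ) : ℝ) * p s ≤ ∑ j ∈ Finset.Ioc u k, z j := by
      calc ((k - u : ℕ) : ℝ) * p s = ∑ _j ∈ Finset.Ioc u k, p s := by
            rw [Finset.sum_const, Nat.card_Ioc, nsmul_eq_mul]
        _ ≤ _ := by
            apply Finset.sum_le_sum
            intro j hj
            simp only [Finset.mem_Ioc] at hj
            exact le_of_lt (hzσ s j (by omega) (le_trans hj.2 hk))
    have hcast : ((k - u : ℕ) : ℝ) = (k : ℝ) - u := by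
      rw [Nat.cast_sub hu]
    rw [hcast] at hge
    linarith
  -- Lemma A : upper bound φ t k δ ≤ v k - k * p (t-1)
  have hA : ∀ n t, R - t ≤ n → 1 ≤ t → t ≤ R → ∀ k, k ≤ σ (t - 1) → ∀ δ, δ ≤ D →
      φ t k δ ≤ v k - (k : ℝ) * p (t - 1) := by
    intro n
    induction n with
    | zero =>
      intro t hRt ht1 htR k hk δ _
      have ht : t = R := by omega
      subst ht
      rw [hφR]
      have h := hvdiff (t - 1) k 0 hk (Nat.zero_le k)
      rw [hv0] at h
      push_cast at h
      linarith
    | succ n ih =>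
      intro t hRt ht1 htR k hk δ hδ
      by_cases hteq : t = R
      · subst hteq
        rw [hφR]
        have h := hvdiff (t - 1) k 0 hk (Nat.zero_le k)
        rw [hv0] at h
        push_cast at h
        linarith
      have htR' : t < R := by omega
      by_cases hterm : k + δ ≤ m
      · exact le_of_eq (hφ1 t htR' k δ hterm)
      · push_neg at hterm
        rw [hφ2 t htR' k δ hterm]
        apply Finset.sup'_le
        intro u hu
        simp only [Finset.mem_range] at hu
        have huσ : u ≤ σ t := by omega
        have huk : u ≤ k := by omega
        have hrec : ∀ δ' : ℕ, δ' ≤ D → φ (t + 1) u δ' ≤ v u - (u : ℝ) * p t := by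
          intro δ' hδ'
          have h := ih (t + 1) (by omega) (by omega) (by omega) u
            (by rw [Nat.add_sub_cancel]; exact huσ) δ' hδ'
          rwa [Nat.add_sub_cancel] at h
        calc ∑ δ' ∈ Finset.range (D + 1), P t δ δ' * φ (t + 1) u δ'
            ≤ ∑ δ' ∈ Finset.range (D + 1), P t δ δ' * (v u - (u : ℝ) * p t) := by
              apply Finset.sum_le_sum
              intro δ' hδ'
              simp only [Finset.mem_range] at hδ'
              exact mul_le_mul_of_nonneg_left (hrec δ' (by omega)) (hPnn t δ δ')
          _ = v u - (u : ℝ) * p t := by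
              rw [← Finset.sum_mul, hPsum t δ hδ, one_mul]
          _ ≤ v u - (u : ℝ) * p (t - 1) := by
              have h1 : p (t - 1) ≤ p t := hpmono (t - 1) t (Nat.sub_le t 1)
              have h2 : (0 : ℝ) ≤ u := Nat.cast_nonneg u
              nlinarith
          _ ≤ v k - (k : ℝ) * p (t - 1) := hvdiff (t - 1) k u hk huk
  -- Lemma B : main monotonicity
  have hB : ∀ n t, R - t ≤ n → 1 ≤ t → t ≤ R → ∀ k, k ≤ σ (t - 1) → ∀ δ, δ < D →
      φ t k (δ + 1) ≤ φ t k δ := by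
    intro n
    induction n with
    | zero =>
      intro t hRt ht1 htR k _ δ _
      have ht : t = R := by omega
      subst ht
      rw [hφR, hφR]
    | succ n ih =>
      intro t hRt ht1 htR k hk δ hδ
      by_cases hteq : t = R
      · subst hteq; rw [hφR, hφR]
      have htR' : t < R := by omega
      by_cases h1 : k + (δ + 1) ≤ m
      · rw [hφ1 t htR' k δ (by omega), hφ1 t htR' k (δ + 1) h1]
      push_neg at h1
      by_cases h2 : k + δ ≤ m
      · -- boundary case
        rw [hφ1 t htR' k δ h2, hφ2 t htR' k (δ + 1) (by omega)]
        apply Finset.sup'_le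
        intro u hu
        simp only [Finset.mem_range] at hu
        have huσ : u ≤ σ t := by omega
        have huk : u ≤ k := by omega
        calc ∑ δ' ∈ Finset.range (D + 1), P t (δ + 1) δ' * φ (t + 1) u δ'
            ≤ ∑ δ' ∈ Finset.range (D + 1), P t (δ + 1) δ' * (v u - (u : ℝ) * p t) := by
              apply Finset.sum_le_sum
              intro δ' hδ'
              simp only [Finset.mem_range] at hδ'
              have h := hA (R - (t + 1)) (t + 1) le_rfl (by omega) (by omega) u
                (by rw [Nat.add_sub_cancel]; exact huσ) δ' (by omega)
              rw [Nat.add_sub_cancel] at h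
              exact mul_le_mul_of_nonneg_left h (hPnn t (δ + 1) δ')
          _ = v u - (u : ℝ) * p t := by
              rw [← Finset.sum_mul, hPsum t (δ + 1) (by omega), one_mul]
          _ ≤ v u - (u : ℝ) * p (t - 1) := by
              have hh1 : p (t - 1) ≤ p t := hpmono (t - 1) t (Nat.sub_le t 1)
              have hh2 : (0 : ℝ) ≤ u := Nat.cast_nonneg u
              nlinarith
          _ ≤ v k - (k : ℝ) * p (t - 1) := hvdiff (t - 1) k u hk huk
      · push_neg at h2
        rw [hφ2 t htR' k δ h2, hφ2 t htR' k (δ + 1) (by omega)]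
        apply Finset.sup'_le
        intro u hu
        refine le_trans ?_ (Finset.le_sup' _ hu)
        simp only [Finset.mem_range] at hu
        have huσ : u ≤ σ t := by omega
        apply mono_exp D (P t δ) (P t (δ + 1)) (fun δ' => φ (t + 1) u δ')
          (hPsum t δ (by omega)) (hPsum t (δ + 1) (by omega))
        · intro s _ _
          exact hSM t s δ hδ
        · intro s hsD
          exact ih (t + 1) (by omega) (by omega) (by omega) u
            (by rw [Nat.add_sub_cancel]; exact huσ) s hsD
  intro t ht1 htR k hk δ hδ
  exact hB (R - t) t le_rfl ht1 htR k hk δ hδ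
end

section
/- In the perfect-information setting against a straightforward bidder with known demand function δ : prices → ℕ (nonincreasing), define p_k = min{p ∈ P : δ(p) + k ≤ m} for each k ∈ {0,...,m} (where P is the finite price grid and the min exists). Then the strategy of repeatedly bidding κ = argmax_{k} (v(k) − k·p_k) terminates the auction at price p_κ and achieves utility v(κ) − κ·p_κ, which is at least the utility v(k) − k·p of any strategy that ends with a final bid k at a terminal price p satisfying k + δ(p) ≤ m. -/
/-- Perfect information against a straightforward bidder: bidding
`κ = argmax_k (v k - k * p_k)`, where `p_k` is the least grid price at which
`δ(p) + k ≤ m`, terminates the auction at `p_κ` and dominates the utility of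
any strategy ending with final bid `k` at a terminal price `q`. -/
theorem stmt17 (m R : ℕ) (pinit ΔP : ℝ) (hΔP : 0 < ΔP)
    (v : ℕ → ℝ) (hv0 : v 0 = 0)
    (δ : ℝ → ℕ) (hδmono : ∀ p q : ℝ, p ≤ q → δ q ≤ δ p)
    (G : Finset ℝ) (hG : G = (Finset.range (R + 1)).image fun t : ℕ => pinit + (t : ℝ) * ΔP)
    (pk : ℕ → ℝ)
    (hpk : ∀ k, k ≤ m → pk k ∈ G ∧ δ (pk k) + k ≤ m ∧
      ∀ q ∈ G, δ q + k ≤ m → pk k ≤ q)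
    (hex : ∀ k, k ≤ m → ∃ q ∈ G, δ q + k ≤ m)
    (κ : ℕ) (hκm : κ ≤ m)
    (hκ : ∀ k, k ≤ m → v k - k * pk k ≤ v κ - κ * pk κ) :
    (δ (pk κ) + κ ≤ m ∧ ∀ q ∈ G, q < pk κ → m < δ q + κ) ∧
    (∀ k, k ≤ m → ∀ q ∈ G, k + δ q ≤ m → v k - k * q ≤ v κ - κ * pk κ) := by
  obtain ⟨hmem, hle, hmin⟩ := hpk κ hκm
  refine ⟨⟨hle, fun q hq hlt => ?_⟩, fun k hk q hq hkq => ?_⟩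
  · by_contra h
    push_neg at h
    exact absurd (hmin q hq h) (not_le.mpr hlt)
  · obtain ⟨_, _, hmink⟩ := hpk k hk
    have h1 : pk k ≤ q := hmink q hq (by omega)
    have h2 : v k - k * q ≤ v k - k * pk k := by
      have := mul_le_mul_of_nonneg_left h1 (by positivity : (0:ℝ) ≤ k)
      linarith
    exact h2.trans (hκ k hk)
end
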